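/- Let f : ℝⁿ → ℝᵐ be differentiable with Jacobian J at x, let G_Y be symmetric positive definite on ℝᵐ, let L = L̄ ∘ f with L̄ differentiable, set g = ∇L̄(f(x)), and assume J has rank n. Let G_X = Jᵀ G_Y J and dx = -G_X⁻¹ Jᵀ g. Then J dx = -P (G_Y⁻¹ g), where P is the G_Y-orthogonal projection onto the column space of J. -/

import Mathlib

/-! The trailing `G` of the projection `P = J (Jᵀ G J)⁻¹ Jᵀ G` cancels against the `G⁻¹` of the
reference-space natural gradient, so both sides reduce to `-J (Jᵀ G J)⁻¹ Jᵀ g`. -/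

open Matrix

namespace Matrix

variable {m n R : Type*} [Fintype m] [Fintype n] [DecidableEq m] [DecidableEq n] [CommRing R]

noncomputable def metricProjection (J : Matrix m n R) (G : Matrix m m R) : Matrix m m R :=
  J * (Jᵀ * G * J)⁻¹ * Jᵀ * G

theorem metricProjection_mul_inv (J : Matrix m n R) {G : Matrix m m R} (hG : IsUnit G.det) :
    metricProjection J G * G⁻¹ = J * (Jᵀ * G * J)⁻¹ * Jᵀ :=
  mul_nonsing_inv_cancel_right _ _ hG

theorem metricProjection_mulVec_inv_mulVec (J : Matrix m n R) {G : Matrix m m R}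
    (hG : IsUnit G.det) (v : m → R) :
    metricProjection J G *ᵥ (G⁻¹ *ᵥ v) = J *ᵥ ((Jᵀ * G * J)⁻¹ *ᵥ (Jᵀ *ᵥ v)) := by
  rw [mulVec_mulVec, metricProjection_mul_inv J hG, mulVec_mulVec, mulVec_mulVec]

end Matrix

theorem pushforward_natural_gradient_general {n m : ℕ}
    (J : Matrix (Fin m) (Fin n) ℝ)
    (GY : Matrix (Fin m) (Fin m) ℝ) (hGY : GY.PosDef)
    (g : Fin m → ℝ) :
    let GX : Matrix (Fin n) (Fin n) ℝ := Jᵀ * GY * J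
    let dx : Fin n → ℝ := -(GX⁻¹ *ᵥ (Jᵀ *ᵥ g))
    let P : Matrix (Fin m) (Fin m) ℝ := J * (Jᵀ * GY * J)⁻¹ * Jᵀ * GY
    J *ᵥ dx = -(P *ᵥ (GY⁻¹ *ᵥ g)) := by
  intro GX dx P
  have hdet : IsUnit GY.det := hGY.det_pos.ne'.isUnit
  rw [mulVec_neg]
  exact congrArg Neg.neg (metricProjection_mulVec_inv_mulVec J hdet g).symm

theorem pushforward_natural_gradient {n m : ℕ}
    (f : EuclideanSpace ℝ (Fin n) → EuclideanSpace ℝ (Fin m))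
    (x : EuclideanSpace ℝ (Fin n))
    (J : Matrix (Fin m) (Fin n) ℝ)
    (hf : HasFDerivAt f ((Matrix.toEuclideanLin J).toContinuousLinearMap) x)
    (hJ : Function.Injective J.mulVec)
    (GY : Matrix (Fin m) (Fin m) ℝ) (hGY : GY.PosDef)
    (Lbar : EuclideanSpace ℝ (Fin m) → ℝ) (hLbar : Differentiable ℝ Lbar)
    (L : EuclideanSpace ℝ (Fin n) → ℝ) (hL : L = fun x => Lbar (f x))
    (g : Fin m → ℝ) (hg : g = WithLp.equiv 2 (Fin m → ℝ) (gradient Lbar (f x))) :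
    let GX : Matrix (Fin n) (Fin n) ℝ := Jᵀ * GY * J
    let dx : Fin n → ℝ := -(GX⁻¹ *ᵥ (Jᵀ *ᵥ g))
    let P : Matrix (Fin m) (Fin m) ℝ := J * (Jᵀ * GY * J)⁻¹ * Jᵀ * GY
    J *ᵥ dx = -(P *ᵥ (GY⁻¹ *ᵥ g)) :=
  pushforward_natural_gradient_general J GY hGY g
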